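/- arXiv:1410.0297 — 2 statements merged into one kernel-verified Lean document; each statement's English description precedes it below -/
import Mathlib

section
/- Fix integers c ≥ 0 and b ≥ 2 with c even and b odd, and let u ∈ U_{[c,b]}. Then there do not exist two consecutive u-attracted numbers: there is no positive integer a such that both a and a + 1 are u-attracted for S_{[c,b]}. -/
/-- The augmented generalized happy function `S_{[c,b]}`: it maps `a` to `c` plus the
sum of the squares of the base-`b` digits of `a`. -/
def S (c b a : ℕ) : ℕ := c + ((Nat.digits b a).map (· ^ 2)).sum

/-- `u ∈ U_{[c,b]}`: `u` is a positive integer that is a periodic point of `S_{[c,b]}`. -/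
def inU (c b u : ℕ) : Prop := 0 < u ∧ ∃ m, 0 < m ∧ (S c b)^[m] u = u

/-! For even `c` and odd `b`, `S_{[c,b]}` preserves parity: `d² ≡ d (mod 2)` for every digit,
and `a` is congruent to its base-`b` digit sum modulo `2` since `b ≡ 1 (mod 2)`. Hence all
numbers attracted to `u` share the parity of `u`, and `a`, `a + 1` cannot both be. -/

theorem Nat.sq_modEq_two_self (d : ℕ) : d ^ 2 ≡ d [MOD 2] := by
  rw [Nat.ModEq, Nat.pow_mod]
  rcases Nat.mod_two_eq_zero_or_one d with h | h <;> simp [h]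

theorem List.sum_map_sq_modEq_two (l : List ℕ) : (l.map (· ^ 2)).sum ≡ l.sum [MOD 2] := by
  induction l with
  | nil => rfl
  | cons d l ih => simpa only [List.map_cons, List.sum_cons] using (Nat.sq_modEq_two_self d).add ih

theorem Function.iterate_modEq_self {n : ℕ} {f : ℕ → ℕ} (hf : ∀ x, f x ≡ x [MOD n]) (k x : ℕ) :
    f^[k] x ≡ x [MOD n] := by
  induction k with
  | zero => rfl
  | succ k ih => exact (Function.iterate_succ_apply' f k x ▸ hf _).trans ih

theorem S_modEq_two (c : ℕ) {b : ℕ} (hb : Odd b) (a : ℕ) : S c b a ≡ c + a [MOD 2] :=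
  (List.sum_map_sq_modEq_two _).add_left c
    |>.trans ((Nat.modEq_digits_sum 2 b (Nat.odd_iff.mp hb) a).symm.add_left c)

theorem S_modEq_two_self {c b : ℕ} (hc : Even c) (hb : Odd b) (a : ℕ) : S c b a ≡ a [MOD 2] := by
  simpa [Nat.ModEq, Nat.add_mod, Nat.even_iff.mp hc] using S_modEq_two c hb a

theorem stmt_15_general (c b : ℕ) (hc : Even c) (hbo : Odd b)
    (u : ℕ) :
    ¬ ∃ a : ℕ, 0 < a ∧ (∃ k : ℕ, (S c b)^[k] a = u) ∧
      (∃ k : ℕ, (S c b)^[k] (a + 1) = u) := by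
  rintro ⟨a, -, ⟨k, rfl⟩, ⟨l, hl⟩⟩
  have hpar := Function.iterate_modEq_self (S_modEq_two_self hc hbo)
  have h : a ≡ a + 1 [MOD 2] := (hpar k a).symm.trans (hl ▸ hpar l (a + 1))
  unfold Nat.ModEq at h
  omega

theorem stmt_15 (c b : ℕ) (hb : 2 ≤ b) (hc : Even c) (hbo : Odd b)
    (u : ℕ) (hu : inU c b u) :
    ¬ ∃ a : ℕ, 0 < a ∧ (∃ k : ℕ, (S c b)^[k] a = u) ∧
      (∃ k : ℕ, (S c b)^[k] (a + 1) = u) :=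
  stmt_15_general c b hc hbo u
end

section
/- Fix integers c ≥ 0 and b ≥ 2, and suppose S_{[c,b]} has only one cycle, i.e., any two periodic points of S_{[c,b]} lie in the same orbit: if S_{[c,b]}^m(u) = u and S_{[c,b]}^{m'}(u') = u' with m, m' ≥ 1, then u' = S_{[c,b]}^j(u) for some j ≥ 0. Then for each u ∈ U_{[c,b]}, every positive integer is u-attracted. -/
/-! Squaring the two lowest base-`b` digits gives at most `2 b²`, and the higher digits
contribute at most `(b - 1) ⌊x / b²⌋ ≤ x / 2`, so `S_{[c,b]}(x) ≤ x / 2 + c + 2 b²`. Hence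
every orbit stays in a finite interval and so reaches a periodic point `v`; as there is only
one cycle, `u` lies on the orbit of `v`. -/

open Function Set

theorem Function.exists_iterate_mem_periodicPts {α : Type*} {f : α → α} {s : Set α}
    (hs : s.Finite) (hf : MapsTo f s s) {a : α} (ha : a ∈ s) :
    ∃ i, f^[i] a ∈ periodicPts f := by
  obtain ⟨i, j, hij, heq⟩ := hs.exists_lt_map_eq_of_forall_mem (f := (f^[·] a))
    fun n ↦ hf.iterate n ha
  refine ⟨i, mk_mem_periodicPts (Nat.sub_pos_of_lt hij) ?_⟩
  rw [IsPeriodicPt, IsFixedPt, ← iterate_add_apply, Nat.sub_add_cancel hij.le, heq]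

theorem S_eq_mod_sq_add (c b x : ℕ) : S c b x = (x % b) ^ 2 + S c b (x / b) := by
  rcases Nat.eq_zero_or_pos x with rfl | hx
  · simp [S]
  obtain rfl | rfl | hb : b = 0 ∨ b = 1 ∨ 1 < b := by omega
  · simp only [S, Nat.digits_zero_succ' hx.ne', Nat.mod_zero, Nat.div_zero, Nat.digits_zero,
      List.map_cons, List.map_nil, List.sum_cons, List.sum_nil]
    ring
  · simp [Nat.mod_one]
  · simp only [S, Nat.digits_def' hb hx, List.map_cons, List.sum_cons]; ring

theorem S_le_add_mul {b : ℕ} (hb : 1 < b) (c x : ℕ) : S c b x ≤ c + (b - 1) * x := by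
  have hsq : ∀ d ∈ Nat.digits b x, d ^ 2 ≤ (b - 1) * d := fun d hd ↦ by
    have := Nat.digits_lt_base hb hd
    rw [sq]; exact Nat.mul_le_mul_right d (by omega)
  calc S c b x ≤ c + ((Nat.digits b x).map ((b - 1) * ·)).sum := by
        unfold S; gcongr 1; exact List.sum_le_sum hsq
    _ = c + (b - 1) * (Nat.digits b x).sum := by rw [List.sum_map_mul_left, List.map_id']
    _ ≤ c + (b - 1) * x := by gcongr; exact Nat.digit_sum_le b x

theorem two_mul_S_le {b : ℕ} (hb : 1 < b) (c x : ℕ) : 2 * S c b x ≤ x + 2 * c + 4 * b ^ 2 := by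
  have hmod : ∀ y, (y % b) ^ 2 ≤ b ^ 2 := fun y ↦ Nat.pow_le_pow_left (Nat.mod_lt y (by omega)).le 2
  have htail : 2 * ((b - 1) * (x / b / b)) ≤ x := calc
    2 * ((b - 1) * (x / b / b)) ≤ b * b * (x / (b * b)) := by
        rw [Nat.div_div_eq_div_mul, ← mul_assoc]
        exact Nat.mul_le_mul_right _ (Nat.mul_le_mul hb (Nat.sub_le b 1))
    _ ≤ x := Nat.mul_div_le x (b * b)
  have := S_le_add_mul hb c (x / b / b)
  rw [S_eq_mod_sq_add c b x, S_eq_mod_sq_add c b (x / b)]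
  linarith [hmod x, hmod (x / b)]

theorem S_pos (c b : ℕ) {x : ℕ} (hx : 0 < x) : 0 < S c b x := by
  have hne : Nat.digits b x ≠ [] := Nat.digits_ne_nil_iff_ne_zero.mpr hx.ne'
  have hlast : 0 < ((Nat.digits b x).getLast hne) ^ 2 :=
    pow_pos (Nat.pos_of_ne_zero (Nat.getLast_digit_ne_zero b hx.ne')) 2
  have := List.le_sum_of_mem (List.mem_map_of_mem (f := (· ^ 2)) (List.getLast_mem hne))
  unfold S; omega

theorem mapsTo_S_Iic {b : ℕ} (hb : 1 < b) (c : ℕ) {B : ℕ} (hB : 2 * c + 4 * b ^ 2 ≤ B) :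
    MapsTo (S c b) (Iic B) (Iic B) := fun x hx ↦ by
  have := two_mul_S_le hb c x
  simp only [mem_Iic] at hx ⊢; omega

theorem stmt_19 (c b : ℕ) (hb : 2 ≤ b)
    (honecycle : ∀ u u' m m' : ℕ, 0 < u → 0 < u' → 0 < m → 0 < m' →
      (S c b)^[m] u = u → (S c b)^[m'] u' = u' → ∃ j : ℕ, u' = (S c b)^[j] u) :
    ∀ u, inU c b u → ∀ a : ℕ, 0 < a → ∃ k : ℕ, (S c b)^[k] a = u := by
  rintro u ⟨hu, m, hm, hum⟩ a ha
  obtain ⟨i, n, hn, hper⟩ := exists_iterate_mem_periodicPts (finite_Iic (2 * c + 4 * b ^ 2 + a))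
    (mapsTo_S_Iic (by omega) c (Nat.le_add_right _ a)) (mem_Iic.2 (Nat.le_add_left a _))
  obtain ⟨k, hk⟩ := honecycle _ u n m (MapsTo.iterate (s := Ioi 0) (fun _ ↦ S_pos c b) i ha) hu hn hm hper hum
  exact ⟨k + i, by rw [iterate_add_apply, ← hk]⟩
end
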